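/- Let y be an involution of [n] with partial tableaux T_0 = ∅, T_1, …, T_k built by column Beissinger inserting the cycles of y in increasing order of their larger element. If 1 ≤ i < j ≤ k, p < q are both entries of T_i, and no entry r of T_j satisfies p < r < q, then p precedes q in the row reading word of T_i if and only if p precedes q in the row reading word of T_j. -/

import Mathlib

/-!
Rows increase and the reading word lists them from the bottom up, so `p < q` occur in this
order exactly when `q` lies in a row weakly above the row of `p`. A step `T ←cBS (a, b)`
puts `b`, larger than every entry so far, at the end of a column, which moves no entry, and
row inserts `a`. If no entry of `T_j` lies strictly between `p` and `q`, then neither `a` nor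
any entry of `T` does, so along the bumping path `p` or `q` can only be bumped as the least
entry exceeding the inserted value. A bumped `p` moves to the next row, and if `q` lay below
`p`, inserting `p` there pushes `q` out of that row; a bumped `q` moves down one row, which is
still weakly above the row of `p`. Hence whether `q` lies weakly above `p` is the same in
`T_i, T_{i+1}, …, T_j`.
-/

namespace GelfandRSK

/-- Schensted insertion of `x` into a single row: replace the first entry greater than `x`,
returning the new row and the bumped entry (if any). -/
def insertRow (r : List ℕ) (x : ℕ) : List ℕ × Option ℕ :=
  match r.findIdx? (fun y => decide (x < y)) with
  | none => (r ++ [x], none)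
  | some i => (r.set i x, r[i]?)

/-- Schensted row insertion of `x` into a tableau (list of rows). -/
def rsInsert : List (List ℕ) → ℕ → List (List ℕ)
  | [], x => [[x]]
  | r :: rest, x =>
    match insertRow r x with
    | (r', none) => r' :: rest
    | (r', some y) => r' :: rsInsert rest y

/-- The (0-indexed) row in which Schensted insertion of `x` adds a new box. -/
def rsBumpRow : List (List ℕ) → ℕ → ℕ
  | [], _ => 0
  | r :: rest, x =>
    match insertRow r x with
    | (_, none) => 0
    | (_, some y) => rsBumpRow rest y + 1

/-- The (0-indexed) column in which Schensted insertion of `x` adds a new box. -/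
def rsBumpCol (T : List (List ℕ)) (x : ℕ) : ℕ := (T.getD (rsBumpRow T x) []).length

/-- Add entry `k` at the end of (0-indexed) row `r`. -/
def addAtRow (T : List (List ℕ)) (r : ℕ) (k : ℕ) : List (List ℕ) :=
  if r < T.length then T.set r (T.getD r [] ++ [k]) else T ++ [[k]]

/-- Add entry `k` at the end of (0-indexed) column `c`. -/
def addAtCol (T : List (List ℕ)) (c : ℕ) (k : ℕ) : List (List ℕ) :=
  addAtRow T (T.findIdx (fun r => decide (r.length ≤ c))) k

/-- The Robinson--Schensted insertion tableau of a word. -/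
def PRS (w : List ℕ) : List (List ℕ) := w.foldl rsInsert []

/-- The Robinson--Schensted pair (insertion tableau, recording tableau) of a word. -/
def RSpair (w : List ℕ) : List (List ℕ) × List (List ℕ) :=
  w.zipIdx.foldl (fun pq ix =>
    (rsInsert pq.1 ix.1, addAtRow pq.2 (rsBumpRow pq.1 ix.1) (ix.2 + 1))) ([], [])

/-- The Robinson--Schensted recording tableau of a word. -/
def QRS (w : List ℕ) : List (List ℕ) := (RSpair w).2

/-- The row reading word: read rows left to right, starting with the last row. -/
def rowWord (T : List (List ℕ)) : List ℕ := T.reverse.flatten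

/-- The shape of a tableau: the list of its row lengths. -/
def shape (T : List (List ℕ)) : List ℕ := T.map List.length

/-- Columns of the tableau are strictly increasing downwards. -/
def colStrict (T : List (List ℕ)) : Prop :=
  ∀ i c, i + 1 < T.length → c < (T.getD (i+1) []).length →
    (T.getD i []).getD c 0 < (T.getD (i+1) []).getD c 0

/-- A partially standard tableau: semistandard, of partition shape, with
distinct positive entries (hence rows and columns strictly increasing). -/
def PartiallyStandard (T : List (List ℕ)) : Prop :=
  (∀ r ∈ T, r ≠ []) ∧
  T.Chain' (fun r₁ r₂ => r₂.length ≤ r₁.length) ∧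
  (∀ r ∈ T, r.Chain' (· < ·)) ∧
  colStrict T ∧
  T.flatten.Nodup ∧
  (∀ x ∈ T.flatten, 0 < x)

/-- A standard tableau with `n` boxes: partially standard with entries exactly `1, …, n`. -/
def IsStandardTab (n : ℕ) (T : List (List ℕ)) : Prop :=
  PartiallyStandard T ∧ T.flatten.Perm (List.range' 1 n)

/-- Row Beissinger insertion of a pair `(a, b)` with `a ≤ b`. -/
def rBS (T : List (List ℕ)) (a b : ℕ) : List (List ℕ) :=
  if a = b then addAtRow T 0 a
  else addAtRow (rsInsert T a) (rsBumpRow T a + 1) b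

/-- Column Beissinger insertion of a pair `(a, b)` with `a ≤ b`. -/
def cBS (T : List (List ℕ)) (a b : ℕ) : List (List ℕ) :=
  if a = b then addAtCol T 0 a
  else addAtCol (rsInsert T a) (rsBumpCol T a + 1) b

/-- The function on 0-based indices underlying a permutation of `Fin n`
(identity outside `[0, n)`). -/
def permFn {n : ℕ} (z : Equiv.Perm (Fin n)) : ℕ → ℕ :=
  fun i => if h : i < n then (z ⟨i, h⟩ : ℕ) else i

/-- The one-line word (with 1-based values) of a function on `[0, m)`. -/
def wordFn (w : ℕ → ℕ) (m : ℕ) : List ℕ := (List.range m).map (fun i => w i + 1)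

/-- The one-line word (with 1-based values) of a permutation in `S_n`. -/
def wordOf {n : ℕ} (z : Equiv.Perm (Fin n)) : List ℕ := wordFn (permFn z) n

/-- The 1-based action of a permutation: `act y j = y(j)` in 1-based notation. -/
def act {n : ℕ} (y : Equiv.Perm (Fin n)) (j : ℕ) : ℕ := permFn y (j - 1) + 1

/-- The 1-based pairs `(a, b)` with `a ≤ b = z(a)` of an involution,
listed in increasing order of `b`. -/
def invPairsFn (w : ℕ → ℕ) (m : ℕ) : List (ℕ × ℕ) :=
  ((List.range m).filter (fun b => decide (w b ≤ b))).map (fun b => (w b + 1, b + 1))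

/-- Row Beissinger correspondence applied to an involution given as a function on `[0, m)`. -/
def PrBSfn (w : ℕ → ℕ) (m : ℕ) : List (List ℕ) :=
  (invPairsFn w m).foldl (fun T p => rBS T p.1 p.2) []

/-- Column Beissinger correspondence applied to an involution given as a function on `[0, m)`. -/
def PcBSfn (w : ℕ → ℕ) (m : ℕ) : List (List ℕ) :=
  (invPairsFn w m).foldl (fun T p => cBS T p.1 p.2) []

/-- The row Beissinger tableau of an involution in `S_n`. -/
def PrBS {n : ℕ} (z : Equiv.Perm (Fin n)) : List (List ℕ) := PrBSfn (permFn z) n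

/-- The column Beissinger tableau of an involution in `S_n`. -/
def PcBS {n : ℕ} (z : Equiv.Perm (Fin n)) : List (List ℕ) := PcBSfn (permFn z) n

/-- The transpose of a tableau. -/
def transposeT (T : List (List ℕ)) : List (List ℕ) :=
  (List.range (T.headD []).length).map (fun c => T.filterMap (fun r => r[c]?))

/-- The length of (0-indexed) column `c`. -/
def colLen (T : List (List ℕ)) (c : ℕ) : ℕ := (T.filter (fun r => decide (c < r.length))).length

/-- The number of columns of odd length. -/
def oddColCount (T : List (List ℕ)) : ℕ :=
  ((List.range (T.headD []).length).filter (fun c => decide (colLen T c % 2 = 1))).length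

/-- The number of rows of odd length. -/
def oddRowCount (T : List (List ℕ)) : ℕ :=
  (T.filter (fun r => decide (r.length % 2 = 1))).length

/-- Apply a function to every entry of a tableau. -/
def applyEntries (f : ℕ → ℕ) (T : List (List ℕ)) : List (List ℕ) := T.map (List.map f)

/-- The transposition of values `j` and `j+1`. -/
def swapVals (j : ℕ) : ℕ → ℕ := fun x => if x = j then j + 1 else if x = j + 1 then j else x

/-- The elementary dual equivalence operator `D_i` acting on a tableau
containing the entries `i-1`, `i`, `i+1`, defined via the row reading word. -/
def Dop (i : ℕ) (T : List (List ℕ)) : List (List ℕ) :=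
  let w := rowWord T
  let p : ℕ → ℕ := fun v => w.idxOf v
  if (p i < p (i+1) ∧ p (i+1) < p (i-1)) ∨ (p (i-1) < p (i+1) ∧ p (i+1) < p i) then
    applyEntries (swapVals (i-1)) T
  else if (p i < p (i-1) ∧ p (i-1) < p (i+1)) ∨ (p (i+1) < p (i-1) ∧ p (i-1) < p i) then
    applyEntries (swapVals i) T
  else T

/-- `x` lies strictly between `u` and `v`. -/
def Btwn {α : Type*} [LT α] (x u v : α) : Prop := (u < x ∧ x < v) ∨ (v < x ∧ x < u)

/-- Exchange the entries at 0-based positions `p` and `q` of a word. -/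
def swapPos (u : List ℕ) (p q : ℕ) : List ℕ := (u.set p (u.getD q 0)).set q (u.getD p 0)

/-- The Knuth move relation at 1-based position `i` on words: either the word is
unchanged and the letters at positions `i-1, i, i+1` are monotone, or the letters at
positions `i-1, i` are exchanged (when the letter at position `i+1` is between them),
or the letters at positions `i, i+1` are exchanged (when the letter at position `i-1`
is between them). -/
def KnuthRelW (i : ℕ) (u v : List ℕ) : Prop :=
  (v = u ∧ ((u.getD (i-2) 0 < u.getD (i-1) 0 ∧ u.getD (i-1) 0 < u.getD i 0) ∨
            (u.getD i 0 < u.getD (i-1) 0 ∧ u.getD (i-1) 0 < u.getD (i-2) 0))) ∨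
  (Btwn (u.getD i 0) (u.getD (i-2) 0) (u.getD (i-1) 0) ∧ v = swapPos u (i-2) (i-1)) ∨
  (Btwn (u.getD (i-2) 0) (u.getD (i-1) 0) (u.getD i 0) ∧ v = swapPos u (i-1) i)

/-- The Knuth move relation at position `i` on permutations. -/
def KnuthRel {n : ℕ} (i : ℕ) (v w : Equiv.Perm (Fin n)) : Prop :=
  KnuthRelW i (wordOf v) (wordOf w)

/-- The dual Knuth move relation at position `i` on permutations. -/
def DualKnuthRel {n : ℕ} (i : ℕ) (v w : Equiv.Perm (Fin n)) : Prop :=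
  KnuthRelW i (wordOf v⁻¹) (wordOf w⁻¹)

/-- Knuth equivalence of permutations. -/
def KnuthEquiv {n : ℕ} (v w : Equiv.Perm (Fin n)) : Prop :=
  Relation.ReflTransGen (fun a b => ∃ i, 1 < i ∧ i < n ∧ KnuthRel i a b) v w

/-- Dual Knuth equivalence of permutations. -/
def DualKnuthEquiv {n : ℕ} (v w : Equiv.Perm (Fin n)) : Prop :=
  Relation.ReflTransGen (fun a b => ∃ i, 1 < i ∧ i < n ∧ DualKnuthRel i a b) v w

/-- The 0-based fixed points of a permutation, in increasing order. -/
def fixList {n : ℕ} (z : Equiv.Perm (Fin n)) : List ℕ :=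
  ((List.finRange n).filter (fun c => decide (z c = c))).map Fin.val

/-- The ascending embedding `ι_asc` of involutions of `[n]` into fixed-point-free
involutions of `[2n]`, as a function on 0-based indices. -/
def iotaAsc {n : ℕ} (z : Equiv.Perm (Fin n)) : ℕ → ℕ := fun i =>
  let F := fixList z
  if h : i < n then
    if z ⟨i, h⟩ = ⟨i, h⟩ then n + F.idxOf i else (z ⟨i, h⟩ : ℕ)
  else if i < n + F.length then F.getD (i - n) 0
  else if i % 2 = 0 then i + 1 else i - 1

/-- The descending embedding `ι_des` of involutions of `[n]` into fixed-point-free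
involutions of `[2n]`, as a function on 0-based indices. -/
def iotaDes {n : ℕ} (z : Equiv.Perm (Fin n)) : ℕ → ℕ := fun i =>
  let F := fixList z
  if h : i < n then
    if z ⟨i, h⟩ = ⟨i, h⟩ then n + F.length - 1 - F.idxOf i else (z ⟨i, h⟩ : ℕ)
  else if i < n + F.length then F.getD (n + F.length - 1 - i) 0
  else if i % 2 = 0 then i + 1 else i - 1

/-- The number of inversions of a function on `[0, m)`. -/
def lenFn (w : ℕ → ℕ) (m : ℕ) : ℕ :=
  ((Finset.range m ×ˢ Finset.range m).filter (fun p => p.1 < p.2 ∧ w p.2 < w p.1)).card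

/-- Weak descents (0-based indices `i` with `0 ≤ i < n-1`). -/
def wDesEq (w : ℕ → ℕ) (n : ℕ) : Finset ℕ :=
  (Finset.range (n-1)).filter (fun i => w i = i + 1 ∧ w (i+1) = i)

/-- Weak ascents. -/
def wAscEq (w : ℕ → ℕ) (n : ℕ) : Finset ℕ :=
  (Finset.range (n-1)).filter (fun i => n ≤ w i ∧ n ≤ w (i+1))

/-- Strict descents. -/
def wDesLt (w : ℕ → ℕ) (n : ℕ) : Finset ℕ :=
  ((Finset.range (n-1)).filter (fun i => w (i+1) < w i)) \ (wAscEq w n ∪ wDesEq w n)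

/-- Strict ascents. -/
def wAscLt (w : ℕ → ℕ) (n : ℕ) : Finset ℕ :=
  ((Finset.range (n-1)).filter (fun i => w i < w (i+1))) \ wAscEq w n

/-- Delete all boxes of `T` whose entry exceeds `n`. -/
def restrictT (T : List (List ℕ)) (n : ℕ) : List (List ℕ) :=
  (T.map (fun r => r.filter (fun x => decide (x ≤ n)))).filter (fun r => !r.isEmpty)

/-- The 0-based indices of the odd columns of `T`, in increasing order. -/
def oddColsList (T : List (List ℕ)) : List ℕ :=
  (List.range (T.headD []).length).filter (fun c => decide (colLen T c % 2 = 1))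

/-- Given a standard tableau `T` with `n` boxes and `k` odd columns, place
`n+1, …, n+k` at the bottoms of the odd columns from left to right, then add
`n+k+1, n+k+3, …, 2n-1` to the first row and `n+k+2, n+k+4, …, 2n` to the second row. -/
def iotaRow (n : ℕ) (T : List (List ℕ)) : List (List ℕ) :=
  let cols := oddColsList T
  let k := cols.length
  let T1 := cols.zipIdx.foldl (fun S ci => addAtCol S ci.1 (n + 1 + ci.2)) T
  let T2 := (List.range ((n - k) / 2)).foldl (fun S m => addAtRow S 0 (n + k + 1 + 2*m)) T1
  (List.range ((n - k) / 2)).foldl (fun S m => addAtRow S 1 (n + k + 2 + 2*m)) T2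

/-- The number of transfer points: 0-based `i < n` with `w i ≥ n` (1-based `w(i) > n`). -/
def transferCount (w : ℕ → ℕ) (n : ℕ) : ℕ :=
  ((List.range n).filter (fun i => decide (n ≤ w i))).length

/-- `G^asc_n`: the image of the ascending embedding. -/
def GAsc (n : ℕ) : Set (ℕ → ℕ) := {f | ∃ w : Equiv.Perm (Fin n), w * w = 1 ∧ f = iotaAsc w}

/-- `G^des_n`: the image of the descending embedding. -/
def GDes (n : ℕ) : Set (ℕ → ℕ) := {f | ∃ w : Equiv.Perm (Fin n), w * w = 1 ∧ f = iotaDes w}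

/-- The value `e(j)` from the statement of Theorem on column Beissinger dual
equivalence: for 1-based `j`, `e(j) = -j` if `y(j) = j`; `e(j) = j` if
`j ≠ y(j) ∈ {i-1, i, i+1}`; and `e(j) = y(j)` otherwise. -/
def eVal {n : ℕ} (y : Equiv.Perm (Fin n)) (i j : ℕ) : ℤ :=
  if act y j = j then -(j : ℤ)
  else if act y j ∈ ({i-1, i, i+1} : Finset ℕ) then (j : ℤ)
  else (act y j : ℤ)

/-- Schensted column insertion, via the transpose. -/
def colInsertT (T : List (List ℕ)) (x : ℕ) : List (List ℕ) :=
  transposeT (rsInsert (transposeT T) x)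

/-- The (0-indexed) row in which Schensted column insertion of `x` adds a box. -/
def colBumpRow (T : List (List ℕ)) (x : ℕ) : ℕ := rsBumpCol (transposeT T) x

/-- The alternative column Beissinger insertion `T ⇐cBS (a,b)`: if `a = b`, add `a`
at the end of the first row; if `a < b`, column insert `a` (adding a box in row `i`)
and add `b` at the end of row `i+1`. -/
def cBSalt (T : List (List ℕ)) (a b : ℕ) : List (List ℕ) :=
  if a = b then addAtRow T 0 a
  else addAtRow (colInsertT T a) (colBumpRow T a + 1) b

def rowIdx (T : List (List ℕ)) (v : ℕ) : ℕ := T.findIdx (fun r => decide (v ∈ r))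

def RowsSorted (T : List (List ℕ)) : Prop := ∀ r ∈ T, r.Pairwise (· < ·)

lemma rowIdx_cons (r : List ℕ) (rest : List (List ℕ)) (v : ℕ) :
    rowIdx (r :: rest) v = if v ∈ r then 0 else rowIdx rest v + 1 := by
  by_cases h : v ∈ r <;> simp [rowIdx, List.findIdx_cons, h]

lemma rowIdx_cons_le_iff (r : List ℕ) (rest : List (List ℕ)) (p q : ℕ) :
    rowIdx (r :: rest) q ≤ rowIdx (r :: rest) p ↔
      q ∈ r ∨ (p ∉ r ∧ rowIdx rest q ≤ rowIdx rest p) := by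
  simp only [rowIdx_cons]
  split_ifs <;> simp_all

lemma RowsSorted.tail {r : List ℕ} {rest : List (List ℕ)} (hs : RowsSorted (r :: rest)) :
    RowsSorted rest :=
  fun s hs' => hs s (List.mem_cons_of_mem r hs')

lemma idxOf_lt_idxOf_of_pairwise {r : List ℕ} (hr : r.Pairwise (· < ·)) {p q : ℕ}
    (hp : p ∈ r) (hq : q ∈ r) (hpq : p < q) : r.idxOf p < r.idxOf q := by
  induction r with
  | nil => simp at hp
  | cons a t ih =>
    rw [List.pairwise_cons] at hr
    simp only [List.idxOf_cons, cond_eq_ite, beq_iff_eq]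
    rcases List.mem_cons.mp hp with rfl | hpt
    · simp [hpq.ne]
    · have hqt : q ∈ t := (List.mem_cons.mp hq).resolve_left fun h => by
        have := hr.1 p hpt; omega
      have hap : a ≠ p := (hr.1 p hpt).ne
      have haq : a ≠ q := (hr.1 q hqt).ne
      simp [hap, haq, ih hr.2 hpt hqt]

lemma mem_rowWord {T : List (List ℕ)} {v : ℕ} : v ∈ rowWord T ↔ v ∈ T.flatten := by
  simp [rowWord]

lemma idxOf_rowWord_lt_iff {T : List (List ℕ)} (hs : RowsSorted T) (hnd : T.flatten.Nodup)
    {p q : ℕ} (hp : p ∈ T.flatten) (hq : q ∈ T.flatten) (hpq : p < q) :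
    (rowWord T).idxOf p < (rowWord T).idxOf q ↔ rowIdx T q ≤ rowIdx T p := by
  induction T with
  | nil => simp at hp
  | cons r rest ih =>
    rw [List.flatten_cons, List.nodup_append] at hnd
    have hW : rowWord (r :: rest) = rowWord rest ++ r := by simp [rowWord]
    rw [hW, rowIdx_cons_le_iff, List.idxOf_append, List.idxOf_append]
    simp only [mem_rowWord]
    rw [List.flatten_cons, List.mem_append] at hp hq
    have hlen : ∀ z ∈ rest.flatten, (rowWord rest).idxOf z < (rowWord rest).length :=
      fun z hz => List.idxOf_lt_length_iff.mpr (mem_rowWord.mpr hz)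
    have hdisj : ∀ z ∈ r, z ∉ rest.flatten := fun z hz h => hnd.2.2 z hz z h rfl
    rcases hp with hpr | hprest <;> rcases hq with hqr | hqrest
    · have := idxOf_lt_idxOf_of_pairwise (hs r List.mem_cons_self) hpr hqr hpq
      simp only [hdisj p hpr, hdisj q hqr, if_false, hpr, hqr, true_or, iff_true]
      omega
    · have hqr : q ∉ r := fun h => hdisj q h hqrest
      have := hlen q hqrest
      simp only [hdisj p hpr, hqrest, hpr, hqr, if_false, if_true, not_true, false_and,
        or_false, iff_false, not_lt]
      omega
    · have hpr : p ∉ r := fun h => hdisj p h hprest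
      have := hlen p hprest
      simp only [hdisj q hqr, hprest, hqr, if_false, if_true, true_or, iff_true]
      omega
    · have hpr : p ∉ r := fun h => hdisj p h hprest
      have hqr : q ∉ r := fun h => hdisj q h hqrest
      simp only [hprest, hqrest, hpr, hqr, if_true, not_false_eq_true, true_and, false_or]
      exact ih hs.tail hnd.2.1 hprest hqrest

lemma cons_set_perm {l : List ℕ} {i : ℕ} (hi : i < l.length) (x : ℕ) :
    (l[i] :: l.set i x).Perm (x :: l) := by
  rw [List.set_eq_take_append_cons_drop, if_pos hi]
  conv_rhs => rw [← List.take_append_drop i l, ← List.getElem_cons_drop hi]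
  exact (List.perm_middle.cons _).trans
    ((List.Perm.swap _ _ _).trans (List.perm_middle.cons _).symm)

lemma mem_set_iff_of_ne {l : List ℕ} {i x z : ℕ} (hi : i < l.length) (hzx : z ≠ x)
    (hzi : z ≠ l[i]) : z ∈ l.set i x ↔ z ∈ l := by
  refine ⟨fun h => (List.mem_or_eq_of_mem_set h).resolve_right hzx, fun h => ?_⟩
  obtain ⟨j, hj, rfl⟩ := List.mem_iff_getElem.mp h
  have hij : i ≠ j := by rintro rfl; exact hzi rfl
  exact List.mem_iff_getElem.mpr ⟨j, by simpa using hj, List.getElem_set_ne hij _⟩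

lemma getElem_notMem_set {l : List ℕ} {i x : ℕ} (hi : i < l.length) (hnd : l.Nodup)
    (hx : l[i] ≠ x) : l[i] ∉ l.set i x := by
  intro h
  obtain ⟨j, hj, hje⟩ := List.mem_iff_getElem.mp h
  rw [List.getElem_set] at hje
  split_ifs at hje with hij
  · exact hx hje.symm
  · exact hij ((hnd.getElem_inj_iff).mp hje.symm)

lemma pairwise_lt_append_singleton {r : List ℕ} (hr : r.Pairwise (· < ·)) {x : ℕ}
    (hx : ∀ z ∈ r, z < x) : (r ++ [x]).Pairwise (· < ·) := by
  simpa [List.pairwise_append, hr] using hx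

lemma findIdx?_lt_eq_some_iff {r : List ℕ} {x i : ℕ} :
    r.findIdx? (fun z => decide (x < z)) = some i ↔
      ∃ hi : i < r.length, x < r[i] ∧ ∀ j (hj : j < i), r[j] ≤ x := by
  simp [List.findIdx?_eq_some_iff_getElem]

lemma findIdx?_lt_eq_none_iff {r : List ℕ} {x : ℕ} :
    r.findIdx? (fun z => decide (x < z)) = none ↔ ∀ z ∈ r, z ≤ x := by
  simp [List.findIdx?_eq_none_iff]

lemma bumped_le {r : List ℕ} (hr : r.Pairwise (· < ·)) {x i : ℕ}
    (h : r.findIdx? (fun z => decide (x < z)) = some i) (hi : i < r.length) {z : ℕ}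
    (hz : z ∈ r) (hxz : x < z) : r[i] ≤ z := by
  obtain ⟨_, -, hbef⟩ := findIdx?_lt_eq_some_iff.mp h
  obtain ⟨j, hj, rfl⟩ := List.mem_iff_getElem.mp hz
  rcases lt_trichotomy j i with hji | rfl | hij
  · exact absurd (hbef j hji) (by omega)
  · exact le_rfl
  · exact (List.pairwise_iff_getElem.mp hr i j hi hj hij).le

lemma pairwise_lt_set_bumped {r : List ℕ} (hr : r.Pairwise (· < ·)) {x i : ℕ} (hx : x ∉ r)
    (h : r.findIdx? (fun z => decide (x < z)) = some i) (hi : i < r.length) :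
    (r.set i x).Pairwise (· < ·) := by
  obtain ⟨_, hxi, hbef⟩ := findIdx?_lt_eq_some_iff.mp h
  rw [List.pairwise_iff_getElem] at hr ⊢
  intro a b ha hb hab
  simp only [List.getElem_set]
  have hrx : ∀ j (hj : j < r.length), r[j] ≠ x := fun j hj h => hx (h ▸ List.getElem_mem hj)
  split_ifs with hia hib hib
  · omega
  · subst hia; exact hxi.trans (hr i b hi _ hab)
  · subst hib; exact lt_of_le_of_ne (hbef a hab) (hrx a _)
  · exact hr a b _ _ hab

lemma rsInsert_cons_of_findIdx?_eq_none {r : List ℕ} {x : ℕ} (rest : List (List ℕ))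
    (h : r.findIdx? (fun z => decide (x < z)) = none) :
    rsInsert (r :: rest) x = (r ++ [x]) :: rest := by
  simp [rsInsert, insertRow, h]

lemma rsInsert_cons_of_findIdx?_eq_some {r : List ℕ} {x i : ℕ} (rest : List (List ℕ))
    (h : r.findIdx? (fun z => decide (x < z)) = some i) (hi : i < r.length) :
    rsInsert (r :: rest) x = r.set i x :: rsInsert rest r[i] := by
  simp [rsInsert, insertRow, h, List.getElem?_eq_getElem hi]

lemma flatten_rsInsert (T : List (List ℕ)) (x : ℕ) :
    (rsInsert T x).flatten.Perm (x :: T.flatten) := by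
  induction T generalizing x with
  | nil => simp [rsInsert]
  | cons r rest ih =>
    rcases hfind : r.findIdx? (fun z => decide (x < z)) with _ | i
    · rw [rsInsert_cons_of_findIdx?_eq_none rest hfind]
      exact (List.perm_append_singleton x r).append_right _
    · obtain ⟨hi, -⟩ := findIdx?_lt_eq_some_iff.mp hfind
      rw [rsInsert_cons_of_findIdx?_eq_some rest hfind hi, List.flatten_cons, List.flatten_cons]
      exact ((ih r[i]).append_left _).trans
        (List.perm_middle.trans ((cons_set_perm hi x).append_right _))

lemma rowsSorted_rsInsert {T : List (List ℕ)} {x : ℕ}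
    (hs : RowsSorted T) (hnd : T.flatten.Nodup) (hx : x ∉ T.flatten) :
    RowsSorted (rsInsert T x) := by
  induction T generalizing x with
  | nil => simp [rsInsert, RowsSorted]
  | cons r rest ih =>
    rw [List.flatten_cons, List.nodup_append] at hnd
    rw [List.flatten_cons, List.mem_append, not_or] at hx
    have hr := hs r List.mem_cons_self
    rcases hfind : r.findIdx? (fun z => decide (x < z)) with _ | i
    · rw [rsInsert_cons_of_findIdx?_eq_none rest hfind]
      have hlt : ∀ z ∈ r, z < x := fun z hz =>
        lt_of_le_of_ne (findIdx?_lt_eq_none_iff.mp hfind z hz) (by rintro rfl; exact hx.1 hz)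
      exact List.forall_mem_cons.mpr ⟨pairwise_lt_append_singleton hr hlt, hs.tail⟩
    · obtain ⟨hi, -⟩ := findIdx?_lt_eq_some_iff.mp hfind
      rw [rsInsert_cons_of_findIdx?_eq_some rest hfind hi]
      refine List.forall_mem_cons.mpr ⟨pairwise_lt_set_bumped hr hx.1 hfind hi, ?_⟩
      exact ih hs.tail hnd.2.1 fun h => hnd.2.2 _ (List.getElem_mem hi) _ h rfl

lemma rowIdx_rsInsert_self (S : List (List ℕ)) (v : ℕ) : rowIdx (rsInsert S v) v = 0 := by
  cases S with
  | nil => simp [rsInsert, rowIdx_cons]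
  | cons r rest =>
    rcases hfind : r.findIdx? (fun z => decide (v < z)) with _ | i
    · simp [rsInsert_cons_of_findIdx?_eq_none rest hfind, rowIdx_cons]
    · obtain ⟨hi, -⟩ := findIdx?_lt_eq_some_iff.mp hfind
      simp [rsInsert_cons_of_findIdx?_eq_some rest hfind hi, rowIdx_cons, List.mem_set hi]

lemma rowIdx_rsInsert_self_lt {S : List (List ℕ)} {v q : ℕ} (hs : RowsSorted S)
    (hnd : S.flatten.Nodup) (hq : q ∈ S.flatten) (hvq : v < q)
    (hbet : ∀ z ∈ S.flatten, ¬ (v < z ∧ z < q)) :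
    rowIdx (rsInsert S v) v < rowIdx (rsInsert S v) q := by
  rw [rowIdx_rsInsert_self]
  cases S with
  | nil => simp at hq
  | cons r rest =>
    rcases hfind : r.findIdx? (fun z => decide (v < z)) with _ | i
    · have hqr : q ∉ r := fun h => absurd (findIdx?_lt_eq_none_iff.mp hfind q h) (by omega)
      simp [rsInsert_cons_of_findIdx?_eq_none rest hfind, rowIdx_cons, hqr, hvq.ne']
    · obtain ⟨hi, hvi, -⟩ := findIdx?_lt_eq_some_iff.mp hfind
      have hr := hs r List.mem_cons_self
      have hqset : q ∉ r.set i v := by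
        intro hmem
        have hqr := (List.mem_or_eq_of_mem_set hmem).resolve_right hvq.ne'
        have hri : r[i] ∈ (r :: rest).flatten :=
          List.mem_flatten_of_mem List.mem_cons_self (List.getElem_mem hi)
        have hiq : r[i] = q := le_antisymm (bumped_le hr hfind hi hqr hvq) <| not_lt.mp
          fun h => hbet _ hri ⟨hvi, h⟩
        exact getElem_notMem_set hi (List.nodup_flatten.mp hnd |>.1 r List.mem_cons_self)
          (by omega) (hiq ▸ hmem)
      simp [rsInsert_cons_of_findIdx?_eq_some rest hfind hi, rowIdx_cons, hqset]

lemma rowIdx_le_iff_rsInsert {S : List (List ℕ)} {v p q : ℕ} (hs : RowsSorted S)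
    (hnd : S.flatten.Nodup) (hv : v ∉ S.flatten) (hp : p ∈ S.flatten) (hq : q ∈ S.flatten)
    (hpq : p < q) (hvpq : ¬ (p < v ∧ v < q)) (hbet : ∀ z ∈ S.flatten, ¬ (p < z ∧ z < q)) :
    rowIdx (rsInsert S v) q ≤ rowIdx (rsInsert S v) p ↔ rowIdx S q ≤ rowIdx S p := by
  induction S generalizing v with
  | nil => simp at hp
  | cons r rest ih =>
    have hr := hs r List.mem_cons_self
    rw [List.flatten_cons, List.nodup_append] at hnd
    have hdisj : ∀ z ∈ r, z ∉ rest.flatten := fun z hz h => hnd.2.2 z hz z h rfl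
    simp only [List.flatten_cons, List.mem_append] at hv hp hq hbet
    have hpv : p ≠ v := by rintro rfl; exact hv hp
    have hqv : q ≠ v := by rintro rfl; exact hv hq
    rcases hfind : r.findIdx? (fun z => decide (v < z)) with _ | i
    · simp [rsInsert_cons_of_findIdx?_eq_none rest hfind, rowIdx_cons_le_iff, hpv, hqv]
    obtain ⟨hi, hvi, hbef⟩ := findIdx?_lt_eq_some_iff.mp hfind
    rw [rsInsert_cons_of_findIdx?_eq_some rest hfind hi, rowIdx_cons_le_iff, rowIdx_cons_le_iff]
    have hbumped_notin := getElem_notMem_set (x := v) hi hnd.1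
      (fun h => hv (Or.inl (h ▸ List.getElem_mem hi)))
    by_cases hip : r[i] = p
    · have hpr : p ∈ r := hip ▸ List.getElem_mem hi
      rw [hip] at hbumped_notin ⊢
      by_cases hqr : q ∈ r
      · simp [hqr, mem_set_iff_of_ne hi hqv (by omega)]
      · have := rowIdx_rsInsert_self_lt hs.tail hnd.2.1 (hq.resolve_left hqr) hpq
          (fun z hz => hbet z (Or.inr hz))
        simp only [hqr, hpr, mem_set_iff_of_ne hi hqv (by omega), hbumped_notin, false_or,
          not_true_eq_false, not_false_eq_true, true_and, false_and, iff_false, not_le]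
        exact this
    by_cases hiq : r[i] = q
    · have hpr : p ∉ r := fun h => by
        have := bumped_le hr hfind hi h (by omega)
        omega
      rw [hiq] at hbumped_notin ⊢
      simp [hpr, hiq ▸ List.getElem_mem hi, mem_set_iff_of_ne hi hpv (by omega),
        rowIdx_rsInsert_self]
    rw [mem_set_iff_of_ne hi hpv (Ne.symm hip), mem_set_iff_of_ne hi hqv (Ne.symm hiq)]
    by_cases hpr : p ∈ r
    · simp [hpr]
    by_cases hqr : q ∈ r
    · simp [hqr]
    simp only [hpr, hqr, not_false_eq_true, true_and, false_or]
    exact ih hs.tail hnd.2.1 (hdisj _ (List.getElem_mem hi)) (hp.resolve_left hpr)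
      (hq.resolve_left hqr) (hbet _ (Or.inl (List.getElem_mem hi))) fun z hz => hbet z (Or.inr hz)

lemma addAtRow_nil (r k : ℕ) : addAtRow [] r k = [[k]] := by
  simp [addAtRow]

lemma addAtRow_cons_zero (h : List ℕ) (t : List (List ℕ)) (k : ℕ) :
    addAtRow (h :: t) 0 k = (h ++ [k]) :: t := by
  simp [addAtRow]

lemma addAtRow_cons_succ (h : List ℕ) (t : List (List ℕ)) (r k : ℕ) :
    addAtRow (h :: t) (r + 1) k = h :: addAtRow t r k := by
  by_cases hr : r < t.length
  · simp [addAtRow, hr]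
  · simp [addAtRow, hr]

lemma flatten_addAtRow (T : List (List ℕ)) (r k : ℕ) :
    (addAtRow T r k).flatten.Perm (T.flatten ++ [k]) := by
  induction T generalizing r with
  | nil => simp [addAtRow_nil]
  | cons h t ih =>
    cases r with
    | zero =>
      simpa [addAtRow_cons_zero] using (List.perm_append_singleton k _).symm.append_left h
    | succ r => simpa [addAtRow_cons_succ] using (ih r).append_left h

lemma rowIdx_addAtRow {T : List (List ℕ)} {k v : ℕ} (hvk : v ≠ k) (hv : v ∈ T.flatten)
    (r : ℕ) : rowIdx (addAtRow T r k) v = rowIdx T v := by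
  induction T generalizing r with
  | nil => simp at hv
  | cons h t ih =>
    cases r with
    | zero => simp [addAtRow_cons_zero, rowIdx_cons, hvk]
    | succ r =>
      rw [addAtRow_cons_succ, rowIdx_cons, rowIdx_cons]
      by_cases hvh : v ∈ h
      · simp [hvh]
      · simp [hvh, ih (by simpa [hvh] using hv) r]

lemma rowsSorted_addAtRow {T : List (List ℕ)} {k : ℕ} (hs : RowsSorted T)
    (hk : ∀ z ∈ T.flatten, z < k) (r : ℕ) : RowsSorted (addAtRow T r k) := by
  induction T generalizing r with
  | nil => simp [addAtRow_nil, RowsSorted]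
  | cons h t ih =>
    simp only [List.flatten_cons, List.mem_append] at hk
    cases r with
    | zero =>
      rw [addAtRow_cons_zero]
      exact List.forall_mem_cons.mpr
        ⟨pairwise_lt_append_singleton (hs h List.mem_cons_self) fun z hz => hk z (Or.inl hz),
          hs.tail⟩
    | succ r =>
      rw [addAtRow_cons_succ]
      exact List.forall_mem_cons.mpr
        ⟨hs h List.mem_cons_self, ih hs.tail (fun z hz => hk z (Or.inr hz)) r⟩

def cycleEntries (c : ℕ × ℕ) : List ℕ := if c.1 = c.2 then [c.1] else [c.1, c.2]

lemma mem_cycleEntries {c : ℕ × ℕ} {z : ℕ} :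
    z ∈ cycleEntries c ↔ z = c.1 ∨ z = c.2 := by
  unfold cycleEntries
  split_ifs with h <;> simp [h]

lemma flatten_cBS (T : List (List ℕ)) (c : ℕ × ℕ) :
    (cBS T c.1 c.2).flatten.Perm (T.flatten ++ cycleEntries c) := by
  unfold cBS addAtCol cycleEntries
  split_ifs
  · exact flatten_addAtRow T _ _
  · exact (flatten_addAtRow _ _ _).trans
      (((flatten_rsInsert T _).append_right _).trans List.perm_middle.symm)

lemma rowsSorted_cBS {T : List (List ℕ)} {a b : ℕ} (hs : RowsSorted T)
    (hnd : T.flatten.Nodup) (ha : a ∉ T.flatten) (hb : ∀ z ∈ T.flatten, z < b)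
    (hab : a ≤ b) : RowsSorted (cBS T a b) := by
  unfold cBS addAtCol
  split_ifs with h
  · exact rowsSorted_addAtRow hs (fun z hz => h ▸ hb z hz) _
  · refine rowsSorted_addAtRow (rowsSorted_rsInsert hs hnd ha) (fun z hz => ?_) _
    rcases List.mem_cons.mp ((flatten_rsInsert T a).mem_iff.mp hz) with rfl | hz
    · omega
    · exact hb z hz

lemma rowIdx_le_iff_cBS {T : List (List ℕ)} {a b p q : ℕ}
    (hs : RowsSorted T) (hnd : T.flatten.Nodup) (ha : a ∉ T.flatten)
    (hb : ∀ z ∈ T.flatten, z < b) (hp : p ∈ T.flatten) (hq : q ∈ T.flatten) (hpq : p < q)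
    (hapq : ¬ (p < a ∧ a < q)) (hbet : ∀ z ∈ T.flatten, ¬ (p < z ∧ z < q)) :
    rowIdx (cBS T a b) q ≤ rowIdx (cBS T a b) p ↔ rowIdx T q ≤ rowIdx T p := by
  have hpb := hb p hp
  have hqb := hb q hq
  unfold cBS addAtCol
  split_ifs
  · rw [rowIdx_addAtRow (by omega) hp, rowIdx_addAtRow (by omega) hq]
  · have hmem : ∀ z ∈ T.flatten, z ∈ (rsInsert T a).flatten := fun z hz =>
      (flatten_rsInsert T a).mem_iff.mpr (List.mem_cons_of_mem a hz)
    rw [rowIdx_addAtRow (by omega) (hmem p hp), rowIdx_addAtRow (by omega) (hmem q hq)]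
    exact rowIdx_le_iff_rsInsert hs hnd ha hp hq hpq hapq hbet

lemma flatten_foldl_cBS (T : List (List ℕ)) (L : List (ℕ × ℕ)) :
    (L.foldl (fun T c => cBS T c.1 c.2) T).flatten.Perm (T.flatten ++ L.flatMap cycleEntries) := by
  induction L generalizing T with
  | nil => simp
  | cons c L ih =>
    rw [List.foldl_cons, List.flatMap_cons, ← List.append_assoc]
    exact (ih _).trans ((flatten_cBS T c).append_right _)

/-- `L` lists the cycles still to be inserted into `T`. -/
structure CBSAdmissible (T : List (List ℕ)) (L : List (ℕ × ℕ)) : Prop where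
  rowsSorted : RowsSorted T
  nodup : (T.flatten ++ L.flatMap cycleEntries).Nodup
  fst_le_snd : ∀ c ∈ L, c.1 ≤ c.2
  lt_snd : ∀ c ∈ L, ∀ z ∈ T.flatten, z < c.2
  snd_sorted : L.Pairwise (fun c c' => c.2 < c'.2)

namespace CBSAdmissible

variable {T : List (List ℕ)}

lemma nodup_flatten {L : List (ℕ × ℕ)} (h : CBSAdmissible T L) : T.flatten.Nodup :=
  h.nodup.sublist (List.sublist_append_left _ _)

lemma sublist {L L' : List (ℕ × ℕ)} (h : CBSAdmissible T L) (hL : L'.Sublist L) :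
    CBSAdmissible T L' where
  rowsSorted := h.rowsSorted
  nodup := h.nodup.sublist ((hL.flatMap _).append_left _)
  fst_le_snd c hc := h.fst_le_snd c (hL.subset hc)
  lt_snd c hc := h.lt_snd c (hL.subset hc)
  snd_sorted := h.snd_sorted.sublist hL

lemma fst_notMem_flatten {c : ℕ × ℕ} {L : List (ℕ × ℕ)} (h : CBSAdmissible T (c :: L)) :
    c.1 ∉ T.flatten := by
  have hnd := h.nodup
  rw [List.flatMap_cons, ← List.append_assoc] at hnd
  exact fun hmem => List.disjoint_of_nodup_append (hnd.sublist (List.sublist_append_left _ _))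
    hmem (mem_cycleEntries.mpr (Or.inl rfl))

lemma cBS_head {c : ℕ × ℕ} {L : List (ℕ × ℕ)} (h : CBSAdmissible T (c :: L)) :
    CBSAdmissible (cBS T c.1 c.2) L := by
  have hperm := flatten_cBS T c
  have hnd := h.nodup
  rw [List.flatMap_cons, ← List.append_assoc] at hnd
  have hsnd := List.pairwise_cons.mp h.snd_sorted
  refine ⟨rowsSorted_cBS h.rowsSorted h.nodup_flatten h.fst_notMem_flatten
      (h.lt_snd c List.mem_cons_self) (h.fst_le_snd c List.mem_cons_self),
      (hperm.append_right _).nodup_iff.mpr hnd,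
      fun c' hc' => h.fst_le_snd c' (List.mem_cons_of_mem c hc'), fun c' hc' z hz => ?_, hsnd.2⟩
  rcases List.mem_append.mp (hperm.subset hz) with hz | hz
  · exact h.lt_snd c' (List.mem_cons_of_mem c hc') z hz
  · have := hsnd.1 c' hc'
    have := h.fst_le_snd c List.mem_cons_self
    rcases mem_cycleEntries.mp hz with rfl | rfl <;> omega

lemma foldl {L₁ L₂ : List (ℕ × ℕ)} (h : CBSAdmissible T (L₁ ++ L₂)) :
    CBSAdmissible (L₁.foldl (fun T c => cBS T c.1 c.2) T) L₂ := by
  induction L₁ generalizing T with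
  | nil => simpa using h
  | cons c L₁ ih => exact ih h.cBS_head

lemma rowIdx_le_iff_foldl {L : List (ℕ × ℕ)} (h : CBSAdmissible T L) {p q : ℕ}
    (hp : p ∈ T.flatten) (hq : q ∈ T.flatten) (hpq : p < q)
    (hbet : ∀ z ∈ (L.foldl (fun T c => cBS T c.1 c.2) T).flatten, ¬ (p < z ∧ z < q)) :
    rowIdx (L.foldl (fun T c => cBS T c.1 c.2) T) q ≤
        rowIdx (L.foldl (fun T c => cBS T c.1 c.2) T) p ↔
      rowIdx T q ≤ rowIdx T p := by
  induction L generalizing T with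
  | nil => rfl
  | cons c L ih =>
    rw [List.foldl_cons] at hbet ⊢
    have hstep : ∀ z ∈ T.flatten ++ cycleEntries c,
        z ∈ (L.foldl (fun T c => cBS T c.1 c.2) (cBS T c.1 c.2)).flatten :=
      fun z hz => (flatten_foldl_cBS _ L).mem_iff.mpr
        (List.mem_append_left _ ((flatten_cBS T c).mem_iff.mpr hz))
    have hcT : ∀ z ∈ T.flatten, z ∈ (cBS T c.1 c.2).flatten := fun z hz =>
      (flatten_cBS T c).mem_iff.mpr (List.mem_append_left _ hz)
    refine (ih h.cBS_head (hcT p hp) (hcT q hq) hbet).trans (rowIdx_le_iff_cBS h.rowsSorted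
      h.nodup_flatten h.fst_notMem_flatten (h.lt_snd c List.mem_cons_self) hp hq hpq
      (hbet _ (hstep _ (List.mem_append_right _ (mem_cycleEntries.mpr (Or.inl rfl)))))
      fun z hz => hbet z (hstep z (List.mem_append_left _ hz)))

lemma idxOf_rowWord_foldl_lt_iff {L : List (ℕ × ℕ)} (h : CBSAdmissible T L) {p q : ℕ}
    (hp : p ∈ T.flatten) (hq : q ∈ T.flatten) (hpq : p < q)
    (hbet : ∀ z ∈ (L.foldl (fun T c => cBS T c.1 c.2) T).flatten, ¬ (p < z ∧ z < q)) :
    (rowWord (L.foldl (fun T c => cBS T c.1 c.2) T)).idxOf p <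
        (rowWord (L.foldl (fun T c => cBS T c.1 c.2) T)).idxOf q ↔
      (rowWord T).idxOf p < (rowWord T).idxOf q := by
  have hfold : CBSAdmissible (L.foldl (fun T c => cBS T c.1 c.2) T) [] :=
    foldl (L₂ := []) (by simpa using h)
  have hmem : ∀ z ∈ T.flatten, z ∈ (L.foldl (fun T c => cBS T c.1 c.2) T).flatten :=
    fun z hz => (flatten_foldl_cBS T L).mem_iff.mpr (List.mem_append_left _ hz)
  rw [idxOf_rowWord_lt_iff h.rowsSorted h.nodup_flatten hp hq hpq,
    idxOf_rowWord_lt_iff hfold.rowsSorted hfold.nodup_flatten (hmem p hp) (hmem q hq) hpq]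
  exact h.rowIdx_le_iff_foldl hp hq hpq hbet

end CBSAdmissible

lemma permFn_permFn {n : ℕ} {y : Equiv.Perm (Fin n)} (hy : y * y = 1) {i : ℕ} (hi : i < n) :
    permFn y (permFn y i) = i := by
  have hyy : y (y ⟨i, hi⟩) = ⟨i, hi⟩ := by
    rw [← Equiv.Perm.mul_apply, hy, Equiv.Perm.one_apply]
  simp [permFn, hi, hyy]

lemma cBSAdmissible_invPairsFn {n : ℕ} {y : Equiv.Perm (Fin n)} (hy : y * y = 1) :
    CBSAdmissible [] (invPairsFn (permFn y) n) := by
  set w := permFn y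
  have hww : ∀ x < n, w (w x) = x := fun _ hx => permFn_permFn hy hx
  have hsorted : ((List.range n).filter (fun b => decide (w b ≤ b))).Pairwise (· < ·) :=
    List.pairwise_lt_range.filter _
  refine ⟨by simp [RowsSorted], ?_, ?_, by simp, ?_⟩
  · rw [List.flatten_nil, List.nil_append, invPairsFn, List.flatMap_map, List.nodup_flatMap]
    refine ⟨fun b _ => by unfold cycleEntries; split_ifs <;> simp_all, hsorted.imp_of_mem ?_⟩
    intro a b ha hb hab z hza hzb
    simp only [List.mem_filter, List.mem_range, decide_eq_true_eq] at ha hb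
    have hwa := hww a ha.1
    have hwb := hww b hb.1
    simp only [mem_cycleEntries] at hza hzb
    rcases hza with hza | hza <;> rcases hzb with hzb | hzb
    · have : w a = w b := by omega
      have : w (w a) = w (w b) := congrArg w this
      omega
    · omega
    · have : w a = w (w b) := congrArg w (by omega)
      omega
    · omega
  · simp only [invPairsFn, List.mem_map, List.mem_filter, decide_eq_true_eq]
    rintro _ ⟨b, ⟨-, hb⟩, rfl⟩
    simpa using hb
  · rw [invPairsFn, List.pairwise_map]
    exact hsorted.imp fun h => by simpa using h

/-- stability of the relative order of two entries in the row
reading words of the partial tableaux of an involution, when no intermediate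
entry appears later. -/
theorem partial_tableaux_order (n : ℕ) (y : Equiv.Perm (Fin n)) (hy : y * y = 1)
    (i j p q : ℕ) :
    let pairs := invPairsFn (permFn y) n
    let Ti := (pairs.take i).foldl (fun T c => cBS T c.1 c.2) ([] : List (List ℕ))
    let Tj := (pairs.take j).foldl (fun T c => cBS T c.1 c.2) ([] : List (List ℕ))
    1 ≤ i → i < j → j ≤ pairs.length →
    p < q → p ∈ Ti.flatten → q ∈ Ti.flatten →
    (∀ r ∈ Tj.flatten, ¬ (p < r ∧ r < q)) →
    ((rowWord Ti).idxOf p < (rowWord Ti).idxOf q ↔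
     (rowWord Tj).idxOf p < (rowWord Tj).idxOf q) := by
  intro pairs Ti Tj _ hij _ hpq hp hq hbet
  obtain ⟨L, hL⟩ := List.take_prefix_take_left (l := pairs) hij.le
  have hadm : CBSAdmissible [] (pairs.take i ++ L) :=
    hL ▸ (cBSAdmissible_invPairsFn hy).sublist (List.take_sublist j pairs)
  have hTj : Tj = L.foldl (fun T c => cBS T c.1 c.2) Ti := by
    simp only [Tj, Ti, ← hL, List.foldl_append]
  rw [hTj] at hbet ⊢
  exact (hadm.foldl.idxOf_rowWord_foldl_lt_iff hp hq hpq hbet).symm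

end GelfandRSK
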